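/- Conversely, every OWA operator with weight vector v = (v_1,...,v_n) is a Choquet integral with respect to the symmetric monotone measure defined by μ(A) := Σ_{i=1}^{|A|} v_i. -/

import Mathlib

open Finset

structure MonMeasure (n : ℕ) where
  m : Finset (Fin n) → ℝ
  empty : m ∅ = 0
  univ : m Finset.univ = 1
  nonneg : ∀ A, 0 ≤ m A
  le_one : ∀ A, m A ≤ 1
  mono : ∀ ⦃A B : Finset (Fin n)⦄, A ⊆ B → m A ≤ m B

/-- The value `f(x*_{i+1})` (1-based) of the increasing ordering `σ`, i.e. `f (σ i)` (0-based). -/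
noncomputable def vals {n : ℕ} (f : Fin n → ℝ) (σ : Equiv.Perm (Fin n)) (i : ℕ) : ℝ :=
  if h : i < n then f (σ ⟨i, h⟩) else 0

/-- The set `A*_{i+1} = {x*_{i+1}, ..., x*_n}` (1-based), i.e. `{σ j : j ≥ i}` (0-based). -/
def upSet {n : ℕ} (σ : Equiv.Perm (Fin n)) (i : ℕ) : Finset (Fin n) :=
  (Finset.univ.filter (fun j : Fin n => i ≤ (j : ℕ))).image σ

/-- The Choquet integral `∫ f dμ = Σ_{i=1}^n μ(A*_i)·[f(x*_i) − f(x*_{i−1})]`, where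
`σ` enumerates `X` so that `f∘σ` is increasing, and `f(x*_0) := 0`. -/
noncomputable def choquet {n : ℕ} (μ : Finset (Fin n) → ℝ) (f : Fin n → ℝ)
    (σ : Equiv.Perm (Fin n)) : ℝ :=
  ∑ i ∈ Finset.range n,
    μ (upSet σ i) * (vals f σ i - if i = 0 then 0 else vals f σ (i - 1))

/-!
A tuple has only one increasing rearrangement, so `f ∘ τ = f ∘ σ ∘ rev`. Abel summation turns the
Choquet integral into `Σ_i (μ(A*_i) − μ(A*_{i+1})) f(x*_i)`, and for the symmetric measure this
increment is the weight `v_{n+1−i}`, because `|A*_i| = n + 1 − i`.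
-/

/-- Abel summation in the shape of `choquet`. -/
lemma sum_range_mul_sub_prev {R : Type*} [CommRing R] (m a : ℕ → R) (n : ℕ) :
    ∑ i ∈ range n, m i * (a i - if i = 0 then 0 else a (i - 1)) =
      ∑ i ∈ range n, (m i - m (i + 1)) * a i + m n * (if n = 0 then 0 else a (n - 1)) := by
  induction n with
  | zero => simp
  | succ n ih =>
    rw [sum_range_succ, ih, sum_range_succ]
    simp only [Nat.add_one_ne_zero, if_false, Nat.add_sub_cancel]
    ring

section

variable {n : ℕ}

lemma card_upSet (σ : Equiv.Perm (Fin n)) (i : ℕ) : #(upSet σ i) = n - i := by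
  have hlt : #{j : Fin n | (j : ℕ) < i} = min n i := Fin.card_filter_val_lt
  have hsplit := card_filter_add_card_filter_not (s := univ) fun j : Fin n => (j : ℕ) < i
  simp only [not_lt, card_univ, Fintype.card_fin] at hsplit
  rw [upSet, card_image_of_injective _ σ.injective]
  omega

lemma upSet_self (σ : Equiv.Perm (Fin n)) : upSet σ n = ∅ :=
  card_eq_zero.mp ((card_upSet σ n).trans (Nat.sub_self n))

lemma choquet_eq_sum_sub {μ : Finset (Fin n) → ℝ} (hμ : μ ∅ = 0) (f : Fin n → ℝ)
    (σ : Equiv.Perm (Fin n)) :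
    choquet μ f σ = ∑ i : Fin n, (μ (upSet σ i) - μ (upSet σ (i + 1))) * f (σ i) := by
  rw [choquet, sum_range_mul_sub_prev, upSet_self, hμ, zero_mul, add_zero,
    ← Fin.sum_univ_eq_sum_range]
  refine sum_congr rfl fun i _ => ?_
  rw [vals, dif_pos i.isLt]

def owaMeasure (v : Fin n → ℝ) (A : Finset (Fin n)) : ℝ :=
  ∑ i ∈ univ.filter (fun i : Fin n => (i : ℕ) < #A), v i

lemma sum_filter_val_lt_succ {M : Type*} [AddCommMonoid M] (v : Fin n → M) (k : Fin n) :
    ∑ j ∈ univ.filter (fun j : Fin n => (j : ℕ) < k + 1), v j =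
      ∑ j ∈ univ.filter (fun j : Fin n => (j : ℕ) < k), v j + v k := by
  have hins : univ.filter (fun j : Fin n => (j : ℕ) < k + 1) =
      insert k (univ.filter fun j : Fin n => (j : ℕ) < k) := by
    ext j
    simp only [mem_filter, mem_univ, true_and, mem_insert, Fin.ext_iff]
    omega
  rw [hins, sum_insert (by simp), add_comm]

lemma owaMeasure_upSet_sub (v : Fin n → ℝ) (σ : Equiv.Perm (Fin n)) (i : Fin n) :
    owaMeasure v (upSet σ i) - owaMeasure v (upSet σ (i + 1)) = v i.rev := by
  have hcard : n - (i : ℕ) = i.rev + 1 := by rw [Fin.val_rev]; omega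
  rw [owaMeasure, owaMeasure, card_upSet, card_upSet, hcard, sum_filter_val_lt_succ,
    Fin.val_rev]
  ring

end

theorem stmt_4_general (n : ℕ) (v : Fin n → ℝ)
    (f : Fin n → ℝ) (σ τ : Equiv.Perm (Fin n))
    (hσ : Monotone (fun i : Fin n => f (σ i)))
    (hτ : Antitone (fun i : Fin n => f (τ i))) :
    ∑ i : Fin n, f (τ i) * v i =
      choquet (fun A : Finset (Fin n) =>
        ∑ i ∈ Finset.univ.filter (fun i : Fin n => (i : ℕ) < A.card), v i) f σ := by
  have hsorted : ∀ i, f (τ i.rev) = f (σ i) :=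
    congrFun (Tuple.unique_monotone (f := f) (σ := Fin.revPerm.trans τ) (hτ.comp Fin.rev_anti) hσ)
  change _ = choquet (owaMeasure v) f σ
  rw [choquet_eq_sum_sub (by simp [owaMeasure])]
  refine (Fintype.sum_equiv Fin.revPerm _ _ fun i => ?_).symm
  rw [owaMeasure_upSet_sub, ← hsorted, mul_comm]
  rfl

/-- Every OWA operator with weight vector `v` is the Choquet integral w.r.t. the
symmetric measure `μ(A) := Σ_{i=1}^{|A|} v_i`. -/
theorem stmt_4 (n : ℕ) (v : Fin n → ℝ) (hv0 : ∀ i, 0 ≤ v i) (hv1 : ∀ i, v i ≤ 1)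
    (hsum : ∑ i, v i = 1)
    (f : Fin n → ℝ) (σ τ : Equiv.Perm (Fin n))
    (hσ : Monotone (fun i : Fin n => f (σ i)))
    (hτ : Antitone (fun i : Fin n => f (τ i))) :
    ∑ i : Fin n, f (τ i) * v i =
      choquet (fun A : Finset (Fin n) =>
        ∑ i ∈ Finset.univ.filter (fun i : Fin n => (i : ℕ) < A.card), v i) f σ :=
  stmt_4_general n v f σ τ hσ hτ
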